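/- arXiv:1503.00179 — 8 statements merged into one kernel-verified Lean document; each statement's English description precedes it below -/
import Mathlib

section
/- A graph G has a strong twin (i.e., there exists a graph H not isomorphic to G such that each of G and H is isomorphic to a proper induced subgraph of the other) if and only if G is self-contained and there exists a non-empty induced subgraph P of G that is not removable but is contained in some removable subgraph of G. -/
universe u u'

/-- A graph is self-contained if it is isomorphic to a proper induced subgraph of itself. -/
def SelfContained {V : Type u} (G : SimpleGraph V) : Prop :=
  ∃ s : Set V, s ≠ Set.univ ∧ Nonempty (G ≃g G.induce s)

/-- A non-empty vertex set `H` induces a removable subgraph of `G` if `G \ H ≅ G`. -/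
def Removable {V : Type u} (G : SimpleGraph V) (H : Set V) : Prop :=
  H.Nonempty ∧ Nonempty (G ≃g G.induce Hᶜ)

/-- Two non-isomorphic graphs are strong twins if each is isomorphic to a proper
induced subgraph of the other. -/
def IsStrongTwin {V : Type u} {W : Type u'} (G : SimpleGraph V) (H : SimpleGraph W) : Prop :=
  ¬ Nonempty (G ≃g H) ∧
  (∃ s : Set W, s ≠ Set.univ ∧ Nonempty (G ≃g H.induce s)) ∧
  (∃ t : Set V, t ≠ Set.univ ∧ Nonempty (H ≃g G.induce t))

/-- `H` is a well-mannered removable subgraph of `G`. -/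
def WellMannered {V : Type u} (G : SimpleGraph V) (H : Set V) : Prop :=
  Removable G H ∧ ∀ f : G ≃g G.induce Hᶜ,
    ∃ α : G ≃g G,
      (fun v => (f v : V)) '' H = (fun v => α v) '' H ∧
      (fun v => α v) '' ((fun v => α v) '' H) = H ∧
      ∀ v ∉ H ∪ (fun v => (f v : V)) '' H, α v = v

/-- `G` is star-like if all of its removable subgraphs are well-mannered. -/
def StarLike {V : Type u} (G : SimpleGraph V) : Prop :=
  ∀ H : Set V, Removable G H → WellMannered G H

/-- `G` is ordinary star-like. -/
def OrdinaryStarLike {V : Type u} (G : SimpleGraph V) : Prop :=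
  StarLike G ∧ ∀ H : Set V, Removable G H →
    (∃ P : Set V, P.Nonempty ∧ P ⊆ H ∧ ¬ Removable G P) →
    ∃ P' : Set V, P'.Nonempty ∧ P' ⊂ H ∧ (H \ P').Finite

/-- A vertex `v` is twisted for `H`: it lies in some removable subgraph of `G`
but in no removable subgraph of `G \ H`. -/
def Twisted {V : Type u} (G : SimpleGraph V) (H : Set V) (v : V) : Prop :=
  (∃ P : Set V, Removable G P ∧ v ∈ P) ∧
  ¬ ∃ Q : Set ↥Hᶜ, Removable (G.induce Hᶜ) Q ∧ ∃ hv : v ∈ Hᶜ, (⟨v, hv⟩ : ↥Hᶜ) ∈ Q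

noncomputable def induceInduceIso {V : Type u} (G : SimpleGraph V) (s : Set V) (t : Set ↥s) :
    (G.induce s).induce t ≃g G.induce (Subtype.val '' t) where
  toEquiv := Equiv.Set.image Subtype.val t Subtype.val_injective
  map_rel_iff' := by
    intro a b
    simp [Equiv.Set.image, Equiv.Set.imageOfInjOn, SimpleGraph.induce, SimpleGraph.comap]

noncomputable def isoInduce {V : Type u} {W : Type u'} {A : SimpleGraph V} {B : SimpleGraph W}
    (e : A ≃g B) (s : Set V) : A.induce s ≃g B.induce (⇑e '' s) where
  toEquiv := Equiv.Set.image e s e.injective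
  map_rel_iff' := by
    intro a b
    simp only [Equiv.Set.image, Equiv.Set.imageOfInjOn, SimpleGraph.induce, SimpleGraph.comap,
      Equiv.coe_fn_mk]
    exact e.map_adj_iff

def induceCongr {V : Type u} (G : SimpleGraph V) {s s' : Set V} (h : s = s') :
    G.induce s ≃g G.induce s' := by subst h; exact SimpleGraph.Iso.refl

/-- `G` has a strong twin iff `G` is self-contained and some non-empty
induced subgraph `P` is not removable but is contained in a removable subgraph. -/
theorem stmt0 {V : Type u} (G : SimpleGraph V) :
    (∃ (W : Type u) (H : SimpleGraph W), IsStrongTwin G H) ↔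
    (SelfContained G ∧ ∃ P : Set V, P.Nonempty ∧ ¬ Removable G P ∧
      ∃ H : Set V, Removable G H ∧ P ⊆ H) := by
  constructor
  · rintro ⟨W, H, hne, ⟨s, hs, ⟨ψ⟩⟩, ⟨t, ht, ⟨φ⟩⟩⟩
    set t' : Set V := Subtype.val '' (⇑φ '' s) with ht'
    have iso1 : G ≃g G.induce t' :=
      (ψ.trans (isoInduce φ s)).trans (induceInduceIso G t (⇑φ '' s))
    have ht'sub : t' ⊆ t := by rintro x ⟨y, -, rfl⟩; exact y.2
    have ht'ne : t' ≠ Set.univ := fun h => ht (Set.eq_univ_of_univ_subset (h ▸ ht'sub))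
    refine ⟨⟨t', ht'ne, ⟨iso1⟩⟩, tᶜ, Set.nonempty_compl.2 ht, ?_, t'ᶜ,
      ⟨Set.nonempty_compl.2 ht'ne, ⟨iso1.trans (induceCongr G (compl_compl t').symm)⟩⟩,
      Set.compl_subset_compl.2 ht'sub⟩
    rintro ⟨-, ⟨e⟩⟩
    exact hne ⟨(e.trans (induceCongr G (compl_compl t))).trans φ.symm⟩
  · rintro ⟨-, P, hPne, hPnr, H, ⟨hHne, ⟨f⟩⟩, hPH⟩
    have hHcsub : Hᶜ ⊆ Pᶜ := Set.compl_subset_compl.2 hPH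
    refine ⟨↥Pᶜ, G.induce Pᶜ, ?_, ?_, ?_⟩
    · exact fun ⟨e⟩ => hPnr ⟨hPne, ⟨e⟩⟩
    · refine ⟨Subtype.val ⁻¹' Hᶜ, ?_, ?_⟩
      · -- there is a vertex in H \ P
        have hne : P ≠ H := fun h => hPnr (by rw [h]; exact ⟨hHne, ⟨f⟩⟩)
        obtain ⟨x, hxH, hxP⟩ : ∃ x, x ∈ H ∧ x ∉ P := by
          by_contra h
          push_neg at h
          exact hne (Set.Subset.antisymm hPH h)
        intro h
        have : (⟨x, hxP⟩ : ↥Pᶜ) ∈ Subtype.val ⁻¹' Hᶜ := h ▸ Set.mem_univ _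
        exact this hxH
      · have himg : Subtype.val '' (Subtype.val ⁻¹' Hᶜ : Set ↥Pᶜ) = Hᶜ := by
          rw [Subtype.image_preimage_coe]
          exact Set.inter_eq_right.2 hHcsub
        exact ⟨f.trans ((induceCongr G himg.symm).trans
          (induceInduceIso G Pᶜ (Subtype.val ⁻¹' Hᶜ)).symm)⟩
    · refine ⟨Pᶜ, ?_, ⟨SimpleGraph.Iso.refl⟩⟩
      intro h
      obtain ⟨x, hx⟩ := hPne
      exact (h ▸ Set.mem_univ x : x ∈ Pᶜ) hx
end

section
/- Let G be a self-contained graph, P a removable subgraph of G, and Q an induced subgraph of G \ P. Then Q is a removable subgraph of G \ P if and only if P ∪ Q is a removable subgraph of G. -/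
universe u u'

/-- Auxiliary iso: inducing twice equals inducing on the intersection. -/
def subIso {V : Type u} (G : SimpleGraph V) (P Q : Set V) :
    (G.induce Pᶜ).induce ({v : ↥Pᶜ | (v : V) ∈ Q}ᶜ) ≃g G.induce (P ∪ Q)ᶜ where
  toFun := fun x => ⟨(x.1 : V), by
    have h1 : (x.1 : V) ∈ Pᶜ := x.1.2
    have h2 : (x.1 : V) ∉ Q := x.2
    simp only [Set.mem_compl_iff, Set.mem_union]
    tauto⟩
  invFun := fun x => ⟨⟨(x : V), by
      have := x.2
      simp only [Set.mem_compl_iff, Set.mem_union] at this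
      exact fun h => this (Or.inl h)⟩, by
      have := x.2
      simp only [Set.mem_compl_iff, Set.mem_union] at this
      exact fun h => this (Or.inr h)⟩
  left_inv := fun x => rfl
  right_inv := fun x => rfl
  map_rel_iff' := Iff.rfl

/-- for self-contained `G`, removable `P` and `Q` a (non-empty) induced
subgraph of `G \ P`, `Q` is removable in `G \ P` iff `P ∪ Q` is removable in `G`. -/
theorem stmt1 {V : Type u} (G : SimpleGraph V) (hG : SelfContained G)
    (P Q : Set V) (hP : Removable G P) (hQP : Q ⊆ Pᶜ) (hQne : Q.Nonempty) :
    Removable (G.induce Pᶜ) {v : ↥Pᶜ | (v : V) ∈ Q} ↔ Removable G (P ∪ Q) := by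
  obtain ⟨hPne, ⟨f⟩⟩ := hP
  constructor
  · rintro ⟨-, ⟨g⟩⟩
    exact ⟨hPne.mono Set.subset_union_left,
      ⟨(f.trans g).trans (subIso G P Q)⟩⟩
  · rintro ⟨-, ⟨g⟩⟩
    refine ⟨?_, ⟨(f.symm.trans g).trans (subIso G P Q).symm⟩⟩
    obtain ⟨q, hq⟩ := hQne
    exact ⟨⟨q, hQP hq⟩, hq⟩
end

section
/- Let G be a self-contained graph and H a removable subgraph of G. Then G contains infinitely many pairwise vertex-disjoint induced subgraphs each isomorphic to H. -/
universe u u'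

/-- a self-contained graph contains infinitely many pairwise
vertex-disjoint induced copies of any removable subgraph `H`. -/
theorem stmt2 {V : Type u} (G : SimpleGraph V) (hG : SelfContained G)
    (H : Set V) (hH : Removable G H) :
    ∃ c : ℕ → Set V, (Pairwise fun i j => Disjoint (c i) (c j)) ∧
      ∀ n, Nonempty (G.induce (c n) ≃g G.induce H) := by
  obtain ⟨-, ⟨f⟩⟩ := hH
  set g : V → V := fun v => (f v : V) with hg
  have hginj : Function.Injective g := fun a b h => f.injective (Subtype.ext h)
  have hgadj : ∀ u v, G.Adj (g u) (g v) ↔ G.Adj u v := by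
    intro u v
    have := f.map_rel_iff (a := u) (b := v)
    exact this
  have hgrange : ∀ v, g v ∈ Hᶜ := fun v => (f v).2
  have hiterinj : ∀ n, Function.Injective (g^[n]) := fun n => hginj.iterate n
  have hiteradj : ∀ n u v, G.Adj (g^[n] u) (g^[n] v) ↔ G.Adj u v := by
    intro n
    induction n with
    | zero => simp
    | succ n ih =>
      intro u v
      rw [Function.iterate_succ_apply', Function.iterate_succ_apply',
        hgadj, ih]
  refine ⟨fun n => g^[n] '' H, ?_, ?_⟩
  · have key : ∀ i j, i < j → Disjoint (g^[i] '' H) (g^[j] '' H) := by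
      intro i j hij
      rw [Set.disjoint_left]
      rintro x ⟨a, ha, rfl⟩ ⟨b, hb, hba⟩
      obtain ⟨k, rfl⟩ : ∃ k, j = i + (k + 1) := ⟨j - i - 1, by omega⟩
      rw [Function.iterate_add_apply] at hba
      have := hiterinj i hba
      rw [Function.iterate_succ_apply'] at this
      exact hgrange (g^[k] b) (this ▸ ha)
    intro i j hij
    rcases lt_or_gt_of_ne hij with h | h
    · exact key i j h
    · exact (key j i h).symm
  · intro n
    set e : ↥H ≃ (g^[n] '' H : Set V) := Equiv.Set.image _ H (hiterinj n) with he
    refine ⟨⟨e.symm, ?_⟩⟩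
    intro a b
    simp only [SimpleGraph.comap_adj, Function.Embedding.coe_subtype]
    rw [← hiteradj n (e.symm a) (e.symm b)]
    have ha : g^[n] (e.symm a : V) = (a : V) := by
      have h := Equiv.Set.image_apply (g^[n]) H (hiterinj n) (e.symm a)
      rw [e.apply_symm_apply] at h
      exact congrArg Subtype.val h.symm
    have hb : g^[n] (e.symm b : V) = (b : V) := by
      have h := Equiv.Set.image_apply (g^[n]) H (hiterinj n) (e.symm b)
      rw [e.apply_symm_apply] at h
      exact congrArg Subtype.val h.symm
    rw [ha, hb]
end

section
/- Let {H₀, H₁, H₂, ...} be a countably infinite family of pairwise vertex-disjoint induced subgraphs of a graph G such that for each i ≥ 1 there is an automorphism α_i of G with α_i(H₀) = H_i, α_i(H_i) = H₀, and α_i(v) = v for every vertex v outside H₀ ∪ H_i. Then G is self-contained and H₀ is a removable subgraph of G. -/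
universe u u'

/-- if `G` has pairwise disjoint induced subgraphs `H 0, H 1, …` and for
each `i ≥ 1` an automorphism swapping `H 0` and `H i` while fixing all other vertices,
then `G` is self-contained and `H 0` is removable. -/
theorem stmt3 {V : Type u} (G : SimpleGraph V) (H : ℕ → Set V)
    (hne : (H 0).Nonempty)
    (hdisj : Pairwise fun i j => Disjoint (H i) (H j))
    (hswap : ∀ i, 1 ≤ i → ∃ α : G ≃g G,
      (fun v => α v) '' H 0 = H i ∧ (fun v => α v) '' H i = H 0 ∧
      ∀ v ∉ H 0 ∪ H i, α v = v) :
    SelfContained G ∧ Removable G (H 0) := by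
  classical
  have huniq : ∀ {i j : ℕ} {v : V}, v ∈ H i → v ∈ H j → i = j := by
    intro i j v hi hj
    by_contra h
    exact Set.disjoint_left.mp (hdisj h) hi hj
  have hnot : ∀ {j k : ℕ} {v : V}, v ∈ H j → j ≠ k → v ∉ H k :=
    fun hv hjk hk => hjk (huniq hv hk)
  have hex : ∀ m : ℕ, ∃ α : G ≃g G,
      (fun v => α v) '' H 0 = H (m+1) ∧ (fun v => α v) '' H (m+1) = H 0 ∧
      ∀ v ∉ H 0 ∪ H (m+1), α v = v :=
    fun m => hswap (m+1) (Nat.succ_le_succ (Nat.zero_le m))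
  choose B hB1 hB2 hB3 using hex
  let A : ℕ → G ≃g G := fun n => Nat.casesOn n (RelIso.refl G.Adj) B
  have hA0 : ∀ v : V, A 0 v = v := fun v => rfl
  have hA1 : ∀ i, (fun v => A i v) '' H 0 = H i := by
    intro i
    cases i with
    | zero => simp [A]
    | succ m => exact hB1 m
  have hA2 : ∀ i, (fun v => A i v) '' H i = H 0 := by
    intro i
    cases i with
    | zero => simp [A]
    | succ m => exact hB2 m
  have fixA : ∀ i (v : V), v ∉ H 0 → v ∉ H i → A i v = v := by
    intro i v h0 hi
    cases i with
    | zero => rfl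
    | succ m => exact hB3 m v (fun hm => (Set.mem_union _ _ _).mp hm |>.elim h0 hi)
  have mem1 : ∀ i (v : V), v ∈ H 0 → A i v ∈ H i := by
    intro i v hv
    rw [← hA1 i]; exact ⟨v, hv, rfl⟩
  have mem2 : ∀ i (v : V), v ∈ H i → A i v ∈ H 0 := by
    intro i v hv
    rw [← hA2 i]; exact ⟨v, hv, rfl⟩
  -- the shift map
  let F : V → V := fun v =>
    if h : ∃ i, v ∈ H i then A (Classical.choose h + 1) (A (Classical.choose h) v) else v
  have Fmem : ∀ i (v : V), v ∈ H i → F v = A (i+1) (A i v) := by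
    intro i v hv
    have h : ∃ j, v ∈ H j := ⟨i, hv⟩
    have hc : Classical.choose h = i := huniq (Classical.choose_spec h) hv
    simp only [F, dif_pos h, hc]
  have Fid : ∀ v : V, (¬ ∃ i, v ∈ H i) → F v = v := by
    intro v h; simp only [F, dif_neg h]
  have FmemH : ∀ i (v : V), v ∈ H i → F v ∈ H (i+1) := by
    intro i v hv
    rw [Fmem i v hv]
    exact mem1 (i+1) _ (mem2 i v hv)
  have FnotH0 : ∀ v : V, F v ∉ H 0 := by
    intro v hv0
    by_cases h : ∃ i, v ∈ H i
    · obtain ⟨i, hi⟩ := h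
      exact Nat.succ_ne_zero i (huniq (FmemH i v hi) hv0)
    · rw [Fid v h] at hv0
      exact h ⟨0, hv0⟩
  -- key: a single automorphism computing F at two points
  have key : ∀ i j (u w : V), u ∈ H i → w ∈ H j → i < j →
      ∃ β : G ≃g G, β u = F u ∧ β w = F w := by
    intro i j u w hu hw hij
    rcases Nat.eq_zero_or_pos i with hi0 | hi1
    · subst hi0
      rcases eq_or_ne j 1 with hj1 | hj1
      · subst hj1
        refine ⟨(A 1).trans (A 2), ?_, ?_⟩
        · show A 2 (A 1 u) = F u
          have h1 : A 1 u ∈ H 1 := mem1 1 u hu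
          rw [fixA 2 _ (hnot h1 one_ne_zero) (hnot h1 (by norm_num)),
            Fmem 0 u hu, hA0]
          norm_num
        · show A 2 (A 1 w) = F w
          rw [Fmem 1 w hw]
          norm_num
      · have hj2 : 2 ≤ j := by omega
        refine ⟨((A 0).trans (A 1)).trans ((A j).trans (A (j+1))), ?_, ?_⟩
        · show A (j+1) (A j (A 1 (A 0 u))) = F u
          rw [hA0]
          have h1 : A 1 u ∈ H 1 := mem1 1 u hu
          rw [fixA j _ (hnot h1 one_ne_zero) (hnot h1 (by omega)),
            fixA (j+1) _ (hnot h1 one_ne_zero) (hnot h1 (by omega)),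
            Fmem 0 u hu, hA0]
          norm_num
        · show A (j+1) (A j (A 1 (A 0 w))) = F w
          rw [hA0, fixA 1 w (hnot hw (by omega)) (hnot hw (by omega)),
            Fmem j w hw]
    · refine ⟨((A j).trans (A (j+1))).trans ((A i).trans (A (i+1))), ?_, ?_⟩
      · show A (i+1) (A i (A (j+1) (A j u))) = F u
        rw [fixA j u (hnot hu (by omega)) (hnot hu (by omega)),
          fixA (j+1) u (hnot hu (by omega)) (hnot hu (by omega)),
          Fmem i u hu]
      · show A (i+1) (A i (A (j+1) (A j w))) = F w
        have h1 : A (j+1) (A j w) ∈ H (j+1) := mem1 (j+1) _ (mem2 j w hw)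
        rw [fixA i _ (hnot h1 (by omega)) (hnot h1 (by omega)),
          fixA (i+1) _ (hnot h1 (by omega)) (hnot h1 (by omega)),
          Fmem j w hw]
  have good : ∀ u w : V, ∃ β : G ≃g G, β u = F u ∧ β w = F w := by
    intro u w
    by_cases hu : ∃ i, u ∈ H i
    · obtain ⟨i, hi⟩ := hu
      by_cases hw : ∃ j, w ∈ H j
      · obtain ⟨j, hj⟩ := hw
        rcases lt_trichotomy i j with h | h | h
        · exact key i j u w hi hj h
        · subst h
          exact ⟨(A i).trans (A (i+1)), (Fmem i u hi).symm, (Fmem i w hj).symm⟩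
        · obtain ⟨β, h1, h2⟩ := key j i w u hj hi h
          exact ⟨β, h2, h1⟩
      · have hw0 : w ∉ H 0 := fun h => hw ⟨0, h⟩
        refine ⟨(A i).trans (A (i+1)), (Fmem i u hi).symm, ?_⟩
        show A (i+1) (A i w) = F w
        rw [fixA i w hw0 (fun h => hw ⟨i, h⟩),
          fixA (i+1) w hw0 (fun h => hw ⟨i+1, h⟩), Fid w hw]
    · by_cases hw : ∃ j, w ∈ H j
      · obtain ⟨j, hj⟩ := hw
        have hu0 : u ∉ H 0 := fun h => hu ⟨0, h⟩
        refine ⟨(A j).trans (A (j+1)), ?_, (Fmem j w hj).symm⟩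
        show A (j+1) (A j u) = F u
        rw [fixA j u hu0 (fun h => hu ⟨j, h⟩),
          fixA (j+1) u hu0 (fun h => hu ⟨j+1, h⟩), Fid u hu]
      · exact ⟨RelIso.refl G.Adj, (Fid u hu).symm, (Fid w hw).symm⟩
  have adj : ∀ u w : V, G.Adj (F u) (F w) ↔ G.Adj u w := by
    intro u w
    obtain ⟨β, h1, h2⟩ := good u w
    rw [← h1, ← h2]
    exact β.map_rel_iff
  have hinj : Function.Injective F := by
    intro u w h
    by_cases hu : ∃ i, u ∈ H i
    · obtain ⟨i, hi⟩ := hu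
      by_cases hw : ∃ j, w ∈ H j
      · obtain ⟨j, hj⟩ := hw
        have e1 : F u ∈ H (i+1) := FmemH i u hi
        have e2 : F w ∈ H (j+1) := FmemH j w hj
        have hij : i = j := by
          have := huniq (h ▸ e1) e2
          omega
        subst hij
        rw [Fmem i u hi, Fmem i w hj] at h
        exact (A i).injective ((A (i+1)).injective h)
      · exfalso
        rw [Fid w hw] at h
        exact hw ⟨i+1, h ▸ FmemH i u hi⟩
    · by_cases hw : ∃ j, w ∈ H j
      · exfalso
        obtain ⟨j, hj⟩ := hw
        rw [Fid u hu] at h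
        exact hu ⟨j+1, h.symm ▸ FmemH j w hj⟩
      · rw [Fid u hu, Fid w hw] at h
        exact h
  have hsurj : ∀ x : V, x ∉ H 0 → ∃ y, F y = x := by
    intro x hx
    by_cases h : ∃ k, x ∈ H k
    · obtain ⟨k, hk⟩ := h
      cases k with
      | zero => exact absurd hk hx
      | succ m =>
        have hx1 : x ∈ (fun v => A (m+1) v) '' H 0 := by rw [hA1 (m+1)]; exact hk
        obtain ⟨z, hz0, hz⟩ := hx1
        have hz1 : z ∈ (fun v => A m v) '' H m := by rw [hA2 m]; exact hz0
        obtain ⟨y, hy, hyz⟩ := hz1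
        refine ⟨y, ?_⟩
        rw [Fmem m y hy]
        simp only at hyz hz
        rw [hyz, hz]
    · exact ⟨x, Fid x h⟩
  let F' : V → ↥((H 0)ᶜ) := fun v => ⟨F v, FnotH0 v⟩
  have hbij : Function.Bijective F' := by
    constructor
    · intro a b hab
      exact hinj (congrArg Subtype.val hab)
    · rintro ⟨x, hx⟩
      obtain ⟨y, hy⟩ := hsurj x hx
      exact ⟨y, Subtype.ext hy⟩
  have iso : G ≃g G.induce ((H 0)ᶜ) := by
    refine ⟨Equiv.ofBijective F' hbij, ?_⟩
    intro a b
    exact adj a b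
  refine ⟨⟨(H 0)ᶜ, ?_, ⟨iso⟩⟩, hne, ⟨iso⟩⟩
  intro hcompl
  obtain ⟨v, hv⟩ := hne
  have : v ∈ (H 0)ᶜ := hcompl ▸ Set.mem_univ v
  exact this hv
end

section
/- Under the hypotheses of the star-removable lemma (pairwise disjoint induced subgraphs H₀, H₁, ... of G with automorphisms α_i swapping H₀ and H_i and fixing all other vertices), the map f defined by f(v) = α_{i+1}(α_i(v)) for v ∈ H_i (with α₀ = id) and f(v) = v otherwise, is an isomorphism from G onto G \ H₀. -/
universe u u'

/-- under the star-removable hypotheses, the map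
`f(v) = α (i+1) (α i v)` for `v ∈ H i` (with `α 0 = id`) and `f(v) = v` otherwise
is an isomorphism from `G` onto `G \ H 0`. -/
theorem stmt4 {V : Type u} (G : SimpleGraph V) (H : ℕ → Set V)
    (hdisj : Pairwise fun i j => Disjoint (H i) (H j))
    (α : ℕ → G ≃g G) (hα0 : ∀ v, α 0 v = v)
    (hswap : ∀ i, 1 ≤ i →
      (fun v => α i v) '' H 0 = H i ∧ (fun v => α i v) '' H i = H 0 ∧
      ∀ v ∉ H 0 ∪ H i, α i v = v)
    (f : V → V)
    (hf1 : ∀ i, ∀ v ∈ H i, f v = α (i + 1) (α i v))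
    (hf2 : ∀ v ∉ ⋃ i, H i, f v = v) :
    ∃ φ : G ≃g G.induce (H 0)ᶜ, ∀ v, (φ v : V) = f v := by
  classical
  -- disjointness helper
  have hd : ∀ {i j : ℕ} {v : V}, i ≠ j → v ∈ H i → v ∈ H j → False := by
    intro i j v hij h1 h2
    exact Set.disjoint_left.mp (hdisj hij) h1 h2
  -- images
  have hmem0i : ∀ i, 1 ≤ i → ∀ v ∈ H 0, α i v ∈ H i := by
    intro i hi v hv
    have := (hswap i hi).1
    rw [← this]
    exact ⟨v, hv, rfl⟩
  have hmemi0 : ∀ i, 1 ≤ i → ∀ v ∈ H i, α i v ∈ H 0 := by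
    intro i hi v hv
    have := (hswap i hi).2.1
    rw [← this]
    exact ⟨v, hv, rfl⟩
  have hfix : ∀ i, 1 ≤ i → ∀ v, v ∉ H 0 → v ∉ H i → α i v = v := by
    intro i hi v h0 h1
    exact (hswap i hi).2.2 v (by simp [h0, h1])
  have hfixs : ∀ i, 1 ≤ i → ∀ v, v ∉ H 0 → v ∉ H i → (α i).symm v = v := by
    intro i hi v h0 h1
    conv_lhs => rw [← hfix i hi v h0 h1]
    exact (α i).symm_apply_apply v
  have hα_to0 : ∀ i, ∀ v ∈ H i, α i v ∈ H 0 := by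
    intro i v hv
    rcases Nat.eq_zero_or_pos i with h | h
    · subst h; rw [hα0]; exact hv
    · exact hmemi0 i h v hv
  -- f maps H i into H (i+1)
  have hfmem : ∀ i, ∀ v ∈ H i, f v ∈ H (i + 1) := by
    intro i v hv
    rw [hf1 i v hv]
    exact hmem0i (i + 1) (by omega) _ (hα_to0 i v hv)
  -- key lemma R
  have hR : ∀ a ∈ H 0, ∀ b ∈ H 0, ∀ k m, 1 ≤ k → 1 ≤ m → k ≠ m →
      (G.Adj a (α k b) ↔ G.Adj (α m a) b) := by
    intro a ha b hb k m hk hm hkm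
    have hkb : α k b ∈ H k := hmem0i k hk b hb
    have hkb0 : α k b ∉ H 0 := fun h => hd (by omega : k ≠ 0) hkb h
    have hkbm : α k b ∉ H m := fun h => hd hkm hkb h
    have hma : α m a ∈ H m := hmem0i m hm a ha
    have hma0 : α m a ∉ H 0 := fun h => hd (by omega : m ≠ 0) hma h
    have hmak : α m a ∉ H k := fun h => hd (Ne.symm hkm) hma h
    calc G.Adj a (α k b)
        ↔ G.Adj (α m a) (α m (α k b)) := ((α m).map_adj_iff).symm
      _ ↔ G.Adj (α m a) (α k b) := by rw [hfix m hm _ hkb0 hkbm]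
      _ ↔ G.Adj ((α k).symm (α m a)) ((α k).symm (α k b)) := ((α k).symm.map_adj_iff).symm
      _ ↔ G.Adj (α m a) b := by rw [hfixs k hk _ hma0 hmak, (α k).symm_apply_apply]
  -- central lemma C
  have hC : ∀ a ∈ H 0, ∀ j, 1 ≤ j → ∀ v ∈ H j, (G.Adj a v ↔ G.Adj a (f v)) := by
    intro a ha j hj v hv
    have hb : α j v ∈ H 0 := hmemi0 j hj v hv
    rw [hf1 j v hv]
    calc G.Adj a v
        ↔ G.Adj (α j a) (α j v) := ((α j).map_adj_iff).symm
      _ ↔ G.Adj a (α (j + 1) (α j v)) :=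
          (hR a ha (α j v) hb (j + 1) j (by omega) hj (by omega)).symm
  -- mixed case lemma M : i < j
  have hM : ∀ i j, i < j → ∀ u ∈ H i, ∀ v ∈ H j, (G.Adj (f u) (f v) ↔ G.Adj u v) := by
    intro i j hij u hu v hv
    have hj1 : 1 ≤ j := by omega
    have ha : α i u ∈ H 0 := hα_to0 i u hu
    -- LHS reduction
    have hL : G.Adj u v ↔ G.Adj (α i u) v := by
      rcases Nat.eq_zero_or_pos i with h | h
      · subst h; rw [hα0]
      · have hv0 : v ∉ H 0 := fun hx => hd (by omega : j ≠ 0) hv hx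
        have hvi : v ∉ H i := fun hx => hd (by omega : j ≠ i) hv hx
        calc G.Adj u v ↔ G.Adj (α i u) (α i v) := ((α i).map_adj_iff).symm
          _ ↔ G.Adj (α i u) v := by rw [hfix i h v hv0 hvi]
    -- RHS reduction
    have hfv : f v ∈ H (j + 1) := hfmem j v hv
    have hfv0 : f v ∉ H 0 := fun hx => hd (by omega : j + 1 ≠ 0) hfv hx
    have hfvi : f v ∉ H (i + 1) := fun hx => hd (by omega : j + 1 ≠ i + 1) hfv hx
    have hRr : G.Adj (f u) (f v) ↔ G.Adj (α i u) (f v) := by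
      rw [hf1 i u hu]
      calc G.Adj (α (i + 1) (α i u)) (f v)
          ↔ G.Adj ((α (i + 1)).symm (α (i + 1) (α i u))) ((α (i + 1)).symm (f v)) :=
            ((α (i + 1)).symm.map_adj_iff).symm
        _ ↔ G.Adj (α i u) (f v) := by
            rw [(α (i + 1)).symm_apply_apply, hfixs (i + 1) (by omega) _ hfv0 hfvi]
    rw [hL, hRr]
    exact (hC (α i u) ha j hj1 v hv).symm
  -- lemma N : v outside all H
  have hN : ∀ i, ∀ u ∈ H i, ∀ v, (∀ k, v ∉ H k) → (G.Adj (f u) (f v) ↔ G.Adj u v) := by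
    intro i u hu v hv
    have hfveq : f v = v := hf2 v (by simp [Set.mem_iUnion, hv])
    rw [hfveq, hf1 i u hu]
    have h1 : α (i + 1) v = v := hfix (i + 1) (by omega) v (hv 0) (hv (i + 1))
    have h2 : α i v = v := by
      rcases Nat.eq_zero_or_pos i with h | h
      · subst h; exact hα0 v
      · exact hfix i h v (hv 0) (hv i)
    calc G.Adj (α (i + 1) (α i u)) v
        ↔ G.Adj (α (i + 1) (α i u)) (α (i + 1) (α i v)) := by rw [h2, h1]
      _ ↔ G.Adj (α i u) (α i v) := (α (i + 1)).map_adj_iff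
      _ ↔ G.Adj u v := (α i).map_adj_iff
  -- equal case
  have hE : ∀ i, ∀ u ∈ H i, ∀ v ∈ H i, (G.Adj (f u) (f v) ↔ G.Adj u v) := by
    intro i u hu v hv
    rw [hf1 i u hu, hf1 i v hv]
    calc G.Adj (α (i + 1) (α i u)) (α (i + 1) (α i v))
        ↔ G.Adj (α i u) (α i v) := (α (i + 1)).map_adj_iff
      _ ↔ G.Adj u v := (α i).map_adj_iff
  -- main adjacency
  have hadj : ∀ u v, G.Adj (f u) (f v) ↔ G.Adj u v := by
    intro u v
    by_cases hu : ∃ i, u ∈ H i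
    · obtain ⟨i, hui⟩ := hu
      by_cases hv : ∃ j, v ∈ H j
      · obtain ⟨j, hvj⟩ := hv
        rcases lt_trichotomy i j with h | h | h
        · exact hM i j h u hui v hvj
        · subst h; exact hE i u hui v hvj
        · rw [G.adj_comm (f u) (f v), G.adj_comm u v]
          exact hM j i h v hvj u hui
      · push_neg at hv
        exact hN i u hui v hv
    · push_neg at hu
      by_cases hv : ∃ j, v ∈ H j
      · obtain ⟨j, hvj⟩ := hv
        rw [G.adj_comm (f u) (f v), G.adj_comm u v]
        exact hN j v hvj u hu
      · push_neg at hv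
        rw [hf2 u (by simp [Set.mem_iUnion, hu]), hf2 v (by simp [Set.mem_iUnion, hv])]
  -- f lands in (H 0)ᶜ
  have hcompl : ∀ v, f v ∈ (H 0)ᶜ := by
    intro v
    by_cases hv : ∃ i, v ∈ H i
    · obtain ⟨i, hvi⟩ := hv
      have := hfmem i v hvi
      exact fun hx => hd (by omega : i + 1 ≠ 0) this hx
    · push_neg at hv
      rw [hf2 v (by simp [Set.mem_iUnion, hv])]
      exact hv 0
  -- injectivity
  have hinj : Function.Injective f := by
    intro u v h
    by_cases hu : ∃ i, u ∈ H i
    · obtain ⟨i, hui⟩ := hu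
      by_cases hv : ∃ j, v ∈ H j
      · obtain ⟨j, hvj⟩ := hv
        rcases eq_or_ne i j with rfl | hij
        · rw [hf1 i u hui, hf1 i v hvj] at h
          exact (α i).injective ((α (i + 1)).injective h)
        · exact absurd (h ▸ hfmem i u hui) (fun hx => hd (by omega : i + 1 ≠ j + 1) hx (hfmem j v hvj))
      · push_neg at hv
        rw [hf2 v (by simp [Set.mem_iUnion, hv])] at h
        exact absurd (h ▸ hfmem i u hui) (hv (i + 1))
    · push_neg at hu
      rw [hf2 u (by simp [Set.mem_iUnion, hu])] at h
      by_cases hv : ∃ j, v ∈ H j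
      · obtain ⟨j, hvj⟩ := hv
        exact absurd (h ▸ hfmem j v hvj) (hu (j + 1))
      · push_neg at hv
        rw [h, hf2 v (by simp [Set.mem_iUnion, hv])]
  -- surjectivity onto (H 0)ᶜ
  have hsurj : ∀ w ∈ (H 0)ᶜ, ∃ u, f u = w := by
    intro w hw
    by_cases hwin : ∃ k, w ∈ H k
    · obtain ⟨k, hwk⟩ := hwin
      have hk0 : k ≠ 0 := fun h => hw (h ▸ hwk)
      obtain ⟨m, rfl⟩ : ∃ m, k = m + 1 := ⟨k - 1, by omega⟩
      -- find b ∈ H 0 with α (m+1) b = w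
      obtain ⟨b, hb, hbw⟩ : ∃ b ∈ H 0, α (m + 1) b = w := by
        have := (hswap (m + 1) (by omega)).1
        rw [← this] at hwk
        obtain ⟨b, hb, hbw⟩ := hwk
        exact ⟨b, hb, hbw⟩
      -- find u ∈ H m with α m u = b
      obtain ⟨u, hu, hub⟩ : ∃ u ∈ H m, α m u = b := by
        rcases Nat.eq_zero_or_pos m with h | h
        · subst h; exact ⟨b, hb, hα0 b⟩
        · have := (hswap m h).2.1
          rw [← this] at hb
          obtain ⟨u, hu, hub⟩ := hb
          exact ⟨u, hu, hub⟩
      exact ⟨u, by rw [hf1 m u hu, hub, hbw]⟩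
    · push_neg at hwin
      exact ⟨w, hf2 w (by simp [Set.mem_iUnion, hwin])⟩
  -- build the equivalence
  let g : V → ↥(H 0)ᶜ := fun v => ⟨f v, hcompl v⟩
  have hbij : Function.Bijective g := by
    constructor
    · intro u v h
      exact hinj (congrArg Subtype.val h)
    · rintro ⟨w, hw⟩
      obtain ⟨u, hu⟩ := hsurj w hw
      exact ⟨u, Subtype.ext hu⟩
  let e : V ≃ ↥(H 0)ᶜ := Equiv.ofBijective g hbij
  refine ⟨⟨e, ?_⟩, fun v => rfl⟩
  intro u v
  show (G.induce (H 0)ᶜ).Adj (g u) (g v) ↔ G.Adj u v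
  simp only [SimpleGraph.induce, SimpleGraph.comap_adj, Function.Embedding.coe_subtype, g]
  exact hadj u v
end

section
/- Let G be a self-contained graph and H a well-mannered removable subgraph of G. Then for every isomorphism f from G onto G \ H, the image f(H) is a removable subgraph of G, and there exists an isomorphism g from G onto G \ f(H) such that g(f(H)) = H. -/
universe u u'

/-- if `H` is a well-mannered removable subgraph of a self-contained
graph `G`, then for every `f ∈ Iso_G(H)`, `f(H)` is removable and some isomorphism
`g : G → G \ f(H)` satisfies `g(f(H)) = H`. -/
theorem stmt6 {V : Type u} (G : SimpleGraph V) (hG : SelfContained G)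
    (H : Set V) (hWM : WellMannered G H) (f : G ≃g G.induce Hᶜ) :
    Removable G ((fun v => (f v : V)) '' H) ∧
    ∃ g : G ≃g G.induce ((fun v => (f v : V)) '' H)ᶜ,
      (fun v => (g v : V)) '' ((fun v => (f v : V)) '' H) = H := by
  obtain ⟨⟨hne, -⟩, hwm⟩ := hWM
  obtain ⟨α, h1, h2, h3⟩ := hwm f
  set fH : Set V := (fun v => (f v : V)) '' H with hfH
  -- α is injective
  have hαinj : Function.Injective (fun v => α v) := α.toEquiv.injective
  have hmem : ∀ v : V, v ∈ H ↔ α v ∈ fH := by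
    intro v
    rw [h1]
    constructor
    · intro hv; exact ⟨v, hv, rfl⟩
    · rintro ⟨w, hw, hww⟩
      have : w = v := hαinj hww
      rwa [this] at hw
  have hmemc : ∀ v : V, v ∈ Hᶜ ↔ α v ∈ fHᶜ := by
    intro v
    simp only [Set.mem_compl_iff]
    exact not_congr (hmem v)
  let e : V ≃ ↥fHᶜ :=
    α.toEquiv.trans ((f.toEquiv).trans (Equiv.subtypeEquiv α.toEquiv hmemc))
  have hecoe : ∀ v : V, ((e v : V)) = α (f (α v)) := fun v => rfl
  let g : G ≃g G.induce fHᶜ := by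
    refine ⟨e, ?_⟩
    intro a b
    have h1' : G.Adj (α a) (α b) ↔ G.Adj a b := α.map_adj_iff
    have h2' : (G.induce Hᶜ).Adj (f (α a)) (f (α b)) ↔ G.Adj (α a) (α b) :=
      f.map_adj_iff
    have h3' : (G.induce fHᶜ).Adj (e a) (e b) ↔
        G.Adj (α ((f (α a) : V))) (α ((f (α b) : V))) := Iff.rfl
    have h4' : (G.induce Hᶜ).Adj (f (α a)) (f (α b)) ↔
        G.Adj ((f (α a) : V)) ((f (α b) : V)) := Iff.rfl
    rw [h3', α.map_adj_iff, ← h4', h2', h1']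
  have himg : (fun v => (g v : V)) '' fH = H := by
    have hg : (fun v => (g v : V)) = (fun v => α v) ∘ (fun v => (f v : V)) ∘ (fun v => α v) := rfl
    rw [hg, Set.image_comp, Set.image_comp]
    have h1' : (fun v => (f v : V)) '' H = (fun v => α v) '' H := h1
    have s1 : (fun v => α v) '' fH = H := by
      show (fun v => α v) '' ((fun v => (f v : V)) '' H) = H
      rw [h1']; exact h2
    rw [s1, h1']
    exact h2
  refine ⟨⟨hne.image _, ⟨g⟩⟩, ⟨g, himg⟩⟩
end

section
/- If G is a self-contained graph, H is a well-mannered removable subgraph of G, f ∈ Iso_G(H), and α is the alternating automorphism for f, then g = α ∘ f ∘ α is an isomorphism from G onto G \ f(H) with g(f(H)) = H. -/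
universe u u'

/-- if `α` is an alternating automorphism for `f ∈ Iso_G(H)`, then
`g = α ∘ f ∘ α` is an isomorphism `G → G \ f(H)` with `g(f(H)) = H`. -/
theorem stmt7 {V : Type u} (G : SimpleGraph V) (hG : SelfContained G)
    (H : Set V) (hWM : WellMannered G H)
    (f : G ≃g G.induce Hᶜ) (α : G ≃g G)
    (hα1 : (fun v => (f v : V)) '' H = (fun v => α v) '' H)
    (hα2 : (fun v => α v) '' ((fun v => α v) '' H) = H)
    (hα3 : ∀ v ∉ H ∪ (fun v => (f v : V)) '' H, α v = v) :
    ∃ g : G ≃g G.induce ((fun v => (f v : V)) '' H)ᶜ,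
      (∀ v, (g v : V) = α ((f (α v) : V))) ∧
      (fun v => (g v : V)) '' ((fun v => (f v : V)) '' H) = H := by
  classical
  have hainj : Function.Injective (fun v => α v) := α.toEquiv.injective
  have hmem : ∀ v, v ∈ Hᶜ ↔ α v ∈ ((fun v => (f v : V)) '' H)ᶜ := by
    intro v
    rw [hα1]
    simp only [Set.mem_compl_iff, Set.mem_image, not_exists, not_and]
    constructor
    · intro hv x hx hxv
      exact hv (hainj hxv ▸ hx)
    · intro h hv
      exact h v hv rfl
  let e : ↥Hᶜ ≃ ↥((fun v => (f v : V)) '' H)ᶜ := α.toEquiv.subtypeEquiv hmem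
  let β : G.induce Hᶜ ≃g G.induce ((fun v => (f v : V)) '' H)ᶜ :=
    { e with map_rel_iff' := fun {a b} => α.map_rel_iff }
  refine ⟨α.trans (f.trans β), fun v => rfl, ?_⟩
  have hfH : ∀ v, v ∈ H ↔ (f v : V) ∈ (fun v => (f v : V)) '' H := by
    intro v
    constructor
    · intro hv; exact ⟨v, hv, rfl⟩
    · rintro ⟨w, hw, hwv⟩
      have : w = v := f.toEquiv.injective (Subtype.ext hwv)
      exact this ▸ hw
  ext x
  constructor
  · rintro ⟨y, hy, rfl⟩
    rw [hα1] at hy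
    obtain ⟨h, hh, rfl⟩ := hy
    have h1 : α (α h) ∈ H := by
      rw [← hα2]; exact ⟨α h, ⟨h, hh, rfl⟩, rfl⟩
    have h2 : (f (α (α h)) : V) ∈ (fun v => α v) '' H := by
      rw [← hα1]; exact ⟨α (α h), h1, rfl⟩
    obtain ⟨w, hw, hweq⟩ := h2
    show (α ((f (α (α h)) : V)) : V) ∈ H
    rw [show ((f (α (α h)) : V)) = α w from hweq.symm, ← hα2]
    exact ⟨α w, ⟨w, hw, rfl⟩, rfl⟩
  · intro hx
    rw [← hα2] at hx
    obtain ⟨w, hw, rfl⟩ := hx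
    rw [← hα1] at hw
    obtain ⟨u, hu, hueq⟩ := hw
    refine ⟨α.symm u, ?_, ?_⟩
    · rw [hα1]
      have : u ∈ (fun v => α v) '' ((fun v => α v) '' H) := hα2.symm ▸ hu
      obtain ⟨z, hz, hzeq⟩ := this
      obtain ⟨z2, hz2, hz2eq⟩ := hz
      refine ⟨z2, hz2, ?_⟩
      have : α.symm u = z := by
        rw [show u = α z from hzeq.symm]
        exact α.symm_apply_apply z
      rw [this]; exact hz2eq
    · show (α ((f (α (α.symm u)) : V)) : V) = α w
      rw [α.apply_symm_apply]
      exact congrArg (fun v => α v) hueq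
end

section
/- The graph G with vertex set A₁ ∪ A₂ ∪ {o}, where A_i = {a_{i,1}, a_{i,2}, ...} and the edges are exactly: a_{1,j} adjacent to a_{2,j} and a_{1,j} adjacent to o for each natural number j, is a self-contained graph, and the induced subgraph on H = {a_{i,2^j} : j ∈ ℕ, i ∈ {1,2}} is a removable subgraph of G. -/
/-! `exampleStar` consists of countably many paths `a (2, j) ~ a (1, j) ~ o` glued at `o`, one
column per `j`. Relabelling the columns along any injection `ℕ ↪ ℕ` is therefore an embedding of
the graph into itself, and its image induces a copy of the graph. The shift `j ↦ j + 1` misses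
column `0`, so the graph is self-contained; enumerating the infinitely many `j` that are not powers
of two gives an embedding whose image is exactly the complement of `H`. -/

universe u u'

/-- The star-like example graph: vertices `a (i, j)` (as `Sum.inl (i, j)` with
`i : Fin 2`) plus a vertex `o = Sum.inr ()`; edges are exactly
`a (1, j) ~ a (2, j)` and `a (1, j) ~ o` (here `i = 0` plays the role of `1`). -/
def exampleStar : SimpleGraph ((Fin 2 × ℕ) ⊕ Unit) :=
  SimpleGraph.fromRel (fun v w =>
    match v, w with
    | Sum.inl (i, j), Sum.inl (i', j') => i = 0 ∧ i' = 1 ∧ j = j'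
    | Sum.inl (i, _), Sum.inr _ => i = 0
    | _, _ => False)

section

variable {V : Type u} {G : SimpleGraph V}

theorem SimpleGraph.Embedding.selfContained (f : G ↪g G) (hf : ¬ Function.Surjective f) :
    SelfContained G :=
  ⟨Set.range f, fun h => hf (Set.range_eq_univ.1 h), ⟨f.isoInduceRange⟩⟩

theorem SimpleGraph.Embedding.removable_compl_range (f : G ↪g G) (hf : (Set.range f)ᶜ.Nonempty) :
    Removable G (Set.range f)ᶜ :=
  ⟨hf, by rw [compl_compl]; exact ⟨f.isoInduceRange⟩⟩

end

theorem Nat.infinite_setOf_notMem_range_two_pow : {j : ℕ | j ∉ Set.range (2 ^ ·)}.Infinite := by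
  -- `2 * k + 3` is odd and larger than `1`.
  refine Set.infinite_of_injective_forall_mem (f := fun k => 2 * k + 3)
    (fun a b h => by simpa using h) ?_
  rintro k ⟨m, hm⟩
  cases m with
  | zero => simp at hm
  | succ m => simp only [pow_succ] at hm; omega

namespace exampleStar

def columnMap (f : ℕ ↪ ℕ) : exampleStar ↪g exampleStar where
  toFun := Sum.map (Prod.map id f) id
  inj' := Sum.map_injective.2 ⟨Function.injective_id.prodMap f.injective, Function.injective_id⟩
  map_rel_iff' := by
    rintro (⟨i, j⟩ | ⟨⟩) (⟨i', j'⟩ | ⟨⟩) <;> simp [exampleStar]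

theorem mem_range_columnMap {f : ℕ ↪ ℕ} {v : (Fin 2 × ℕ) ⊕ Unit} :
    v ∈ Set.range (columnMap f) ↔ ∀ i j, v = Sum.inl (i, j) → j ∈ Set.range f := by
  rcases v with ⟨i, j⟩ | ⟨⟩ <;> simp [columnMap]

end exampleStar

open exampleStar in
/-- the graph above is self-contained, and the set
`H = {a (i, 2^j) : i ∈ {1,2}, j ∈ ℕ}` induces a removable subgraph. -/
theorem stmt12 :
    SelfContained exampleStar ∧
    Removable exampleStar
      {v : (Fin 2 × ℕ) ⊕ Unit | ∃ (i : Fin 2) (j : ℕ), v = Sum.inl (i, 2 ^ j)} := by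
  refine ⟨(columnMap ⟨Nat.succ, Nat.succ_injective⟩).selfContained fun hsurj => ?_, ?_⟩
  · obtain ⟨j, hj⟩ := mem_range_columnMap.1 (hsurj (Sum.inl (0, 0))) 0 0 rfl
    exact Nat.succ_ne_zero j hj
  · have hT := Nat.infinite_setOf_notMem_range_two_pow
    let g : ℕ ↪ ℕ := ⟨Nat.nth _, Nat.nth_injective hT⟩
    have hg : Set.range g = {j | j ∉ Set.range (2 ^ ·)} := Nat.range_nth_of_infinite hT
    have hH : (Set.range (columnMap g))ᶜ =
        {v : (Fin 2 × ℕ) ⊕ Unit | ∃ (i : Fin 2) (j : ℕ), v = Sum.inl (i, 2 ^ j)} := by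
      ext v
      simp only [Set.mem_compl_iff, mem_range_columnMap, hg]
      rcases v with ⟨i, j⟩ | ⟨⟩
      · fin_cases i <;> simp [eq_comm]
      · simp
    rw [← hH]
    exact (columnMap g).removable_compl_range (hH ▸ ⟨Sum.inl (0, 1), 0, 0, rfl⟩)
end
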